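/- For any positive polynomial p, there exists N such that for all n ≥ N and for any quantum operation (CPTP map) Φ and any POVM {E_m} on the output space, the total variation distance between the outcome distributions on inputs ρ⁰_odd and ρ¹_odd is less than 1/p(n). In particular any distinguishing probability difference |Pr[C_n(ρ⁰_odd)=1] − Pr[C_n(ρ¹_odd)=1]| < 1/p(n). -/

import Mathlib

open Matrix Finset
open scoped ComplexOrder Kronecker

/-- Trace norm `tr √(Aᴴ A)` of a complex square matrix. -/
noncomputable def traceNorm {ι : Type*} [Fintype ι] [DecidableEq ι] (A : Matrix ι ι ℂ) : ℝ :=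
  ((((Matrix.posSemidef_conjTranspose_mul_self A).1.eigenvectorUnitary : Matrix ι ι ℂ) *
      diagonal (((↑) : ℝ → ℂ) ∘ (√·) ∘ (Matrix.posSemidef_conjTranspose_mul_self A).1.eigenvalues) *
      (star (Matrix.posSemidef_conjTranspose_mul_self A).1.eigenvectorUnitary :
        Matrix ι ι ℂ)).trace).re

/-- Bitwise XOR on bit strings. -/
def xo {n : ℕ} (i k : Fin n → Bool) : Fin n → Bool := fun j => xor (i j) (k j)

/-- Hamming weight of a bit string. -/
def wt {n : ℕ} (i : Fin n → Bool) : ℕ := (Finset.univ.filter fun j => i j = true).card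

/-- The rank-one operator `|i⟩⟨j|`. -/
def ketbra {n : ℕ} (i j : Fin n → Bool) : Matrix (Fin n → Bool) (Fin n → Bool) ℂ :=
  Matrix.single i j 1

/-- `ρ⁰_{k,i} = ½(|i⟩+|i⊕k⟩)(⟨i|+⟨i⊕k|)`. -/
noncomputable def rho0 {n : ℕ} (k i : Fin n → Bool) : Matrix (Fin n → Bool) (Fin n → Bool) ℂ :=
  (1/2 : ℂ) • (ketbra i i + ketbra i (xo i k) + ketbra (xo i k) i + ketbra (xo i k) (xo i k))

/-- `ρ¹_{k,i} = ½(|i⟩-|i⊕k⟩)(⟨i|-⟨i⊕k|)`. -/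
noncomputable def rho1 {n : ℕ} (k i : Fin n → Bool) : Matrix (Fin n → Bool) (Fin n → Bool) ℂ :=
  (1/2 : ℂ) • (ketbra i i - ketbra i (xo i k) - ketbra (xo i k) i + ketbra (xo i k) (xo i k))

/-- `Ω_n`, the set of bit strings of odd Hamming weight. -/
def Omega (n : ℕ) : Finset (Fin n → Bool) := Finset.univ.filter fun k => Odd (wt k)
/-- The averaged state `ρᵇ_odd`. -/
noncomputable def rhoOdd (n : ℕ) (b : Bool) : Matrix (Fin n → Bool) (Fin n → Bool) ℂ :=
  ((1 : ℂ) / (2 ^ (n-1) * 2 ^ n)) •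
    ∑ k ∈ Omega n, ∑ i : Fin n → Bool, (if b then rho1 k i else rho0 k i)

/-!
The difference `ρ⁰_odd - ρ¹_odd` equals `2^{-(n-1)} (|+⟩⟨+| - |χ⟩⟨χ|)`, where `|+⟩` is the uniform
superposition and `|χ⟩` its twist by the parity signs `(-1)^{wt i}`: the `(a, b)` entry of both sides
only depends on the parity of `wt (a ⊕ b)`. A channel in Kraus form followed by a POVM turns each of
the two states `|+⟩⟨+|`, `|χ⟩⟨χ|` into a probability vector, and two probability vectors are at
`ℓ¹`-distance at most `2`. So the total variation distance is at most `2^{-(n-1)}`, which eventually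
beats `1 / p(n)`.
-/

open Filter

lemma Matrix.PosSemidef.trace_mul_nonneg {𝕜 ι : Type*} [RCLike 𝕜] [Fintype ι]
    {P Q : Matrix ι ι 𝕜} (hP : P.PosSemidef) (hQ : Q.PosSemidef) : 0 ≤ (P * Q).trace := by
  classical
  open scoped MatrixOrder in
  obtain ⟨B, rfl⟩ := CStarAlgebra.nonneg_iff_eq_star_mul_self.mp hP.nonneg
  rw [star_eq_conjTranspose, Matrix.mul_assoc, Matrix.trace_mul_comm]
  exact (hQ.mul_mul_conjTranspose_same B).trace_nonneg

section Kraus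

variable {𝕜 ι κ ν : Type*} [RCLike 𝕜] [Fintype ι] [Fintype κ] [Fintype ν] (K : ν → Matrix κ ι 𝕜)

lemma posSemidef_sum_mul_mul_conjTranspose {A : Matrix ι ι 𝕜} (hA : A.PosSemidef) :
    (∑ j, K j * A * (K j)ᴴ).PosSemidef :=
  posSemidef_sum _ fun j _ => hA.mul_mul_conjTranspose_same (K j)

lemma trace_sum_mul_mul_conjTranspose [DecidableEq ι]
    (hK : ∑ j, (K j)ᴴ * K j = 1) (A : Matrix ι ι 𝕜) :
    (∑ j, K j * A * (K j)ᴴ).trace = A.trace := by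
  simp_rw [trace_sum, trace_mul_cycle (K _), ← trace_sum, ← Finset.sum_mul, hK, Matrix.one_mul]

end Kraus

lemma sum_norm_trace_mul_sub_le {ι κ : Type*} [Fintype ι] [Fintype κ] [DecidableEq κ]
    {P Q : Matrix κ κ ℂ} (hP : P.PosSemidef) (hQ : Q.PosSemidef) {E : ι → Matrix κ κ ℂ}
    (hE : ∀ j, (E j).PosSemidef) (hE1 : ∑ j, E j = 1) :
    ∑ j, ‖(P * E j).trace - (Q * E j).trace‖ ≤ P.trace.re + Q.trace.re := by
  have hprob (R : Matrix κ κ ℂ) : ∑ j, (R * E j).trace.re = R.trace.re := by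
    rw [← Complex.re_sum, ← trace_sum, ← Matrix.mul_sum, hE1, Matrix.mul_one]
  calc ∑ j, ‖(P * E j).trace - (Q * E j).trace‖
      ≤ ∑ j, (‖(P * E j).trace‖ + ‖(Q * E j).trace‖) := sum_le_sum fun j _ => norm_sub_le _ _
    _ = ∑ j, ((P * E j).trace.re + (Q * E j).trace.re) := by
      simp_rw [Complex.re_eq_norm.mpr (hP.trace_mul_nonneg (hE _)),
        Complex.re_eq_norm.mpr (hQ.trace_mul_nonneg (hE _))]
    _ = P.trace.re + Q.trace.re := by rw [sum_add_distrib, hprob, hprob]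

lemma trace_map_mul_sub_trace_map_mul {ι κ : Type*} [Fintype ι] [Fintype κ]
    (Φ : Matrix ι ι ℂ →ₗ[ℂ] Matrix κ κ ℂ) {X Y X' Y' : Matrix ι ι ℂ} {c : ℂ}
    (h : X - Y = c • (X' - Y')) (E : Matrix κ κ ℂ) :
    (Φ X * E).trace - (Φ Y * E).trace = c * ((Φ X' * E).trace - (Φ Y' * E).trace) := by
  rw [← trace_sub, ← Matrix.sub_mul, ← map_sub, h, map_smul, Matrix.smul_mul, trace_smul,
    smul_eq_mul, map_sub, Matrix.sub_mul, trace_sub]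

/-- `|v⟩⟨v| / |ι|`, the state `|ι|^{-1/2} ∑ᵢ v i |i⟩` when every `|v i| = 1`. -/
noncomputable def phaseState {ι : Type*} [Fintype ι] (v : ι → ℂ) : Matrix ι ι ℂ :=
  (Fintype.card ι : ℂ)⁻¹ • vecMulVec v (star v)

lemma phaseState_posSemidef {ι : Type*} [Fintype ι] (v : ι → ℂ) : (phaseState v).PosSemidef :=
  (posSemidef_vecMulVec_self_star v).smul (by simp)

lemma trace_phaseState {ι : Type*} [Fintype ι] [Nonempty ι] {v : ι → ℂ} (hv : ∀ i, ‖v i‖ = 1) :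
    (phaseState v).trace = 1 := by
  have hvv : ∀ i, v i * starRingEnd ℂ (v i) = 1 := fun i => by
    rw [Complex.mul_conj, Complex.normSq_eq_norm_sq, hv]; simp
  simp [phaseState, trace, vecMulVec_apply, hvv]

lemma Polynomial.eventually_eval_natCast_lt_two_pow_pred (p : Polynomial ℝ) :
    ∀ᶠ n : ℕ in atTop, p.eval (n : ℝ) < 2 ^ (n - 1) := by
  have hdeg : p.degree ≤ (Polynomial.X ^ p.natDegree : Polynomial ℝ).degree := by
    rw [Polynomial.degree_X_pow]; exact Polynomial.degree_le_natDegree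
  have hp : (fun n : ℕ => p.eval (n : ℝ)) =o[atTop] fun n => (2 : ℝ) ^ n := by
    refine ((Polynomial.isBigO_atTop_of_degree_le _ _ hdeg).comp_tendsto
      tendsto_natCast_atTop_atTop).trans_isLittleO ?_
    simpa [Function.comp_def] using
      isLittleO_pow_const_const_pow_of_one_lt (R := ℝ) p.natDegree one_lt_two
  filter_upwards [hp.bound (by norm_num : (0 : ℝ) < 1 / 4), eventually_ge_atTop 1] with n hn h1
  have h2n : (2 : ℝ) ^ n = 2 * 2 ^ (n - 1) := by rw [← pow_succ', Nat.sub_add_cancel h1]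
  rw [Real.norm_eq_abs, norm_pow, Real.norm_ofNat] at hn
  linarith [le_abs_self (p.eval (n : ℝ)), pow_pos (two_pos : (0 : ℝ) < 2) (n - 1)]

lemma neg_one_pow_wt {n : ℕ} (c : Fin n → Bool) :
    (-1 : ℂ) ^ wt c = ∏ j, if c j then -1 else 1 := by
  rw [wt, ← prod_const, prod_filter]

lemma neg_one_pow_wt_xo {n : ℕ} (a b : Fin n → Bool) :
    (-1 : ℂ) ^ wt (xo a b) = (-1) ^ wt a * (-1) ^ wt b := by
  simp only [neg_one_pow_wt, ← prod_mul_distrib]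
  refine prod_congr rfl fun j _ => ?_
  by_cases ha : a j <;> by_cases hb : b j <;> simp [xo, ha, hb]

lemma rho0_sub_rho1 {n : ℕ} (k i : Fin n → Bool) :
    rho0 k i - rho1 k i = ketbra i (xo i k) + ketbra (xo i k) i := by
  rw [rho0, rho1]
  module

lemma xo_eq_iff {n : ℕ} {a k b : Fin n → Bool} : xo a k = b ↔ k = xo a b := by
  simp only [funext_iff, xo]
  refine forall_congr' fun j => ?_
  cases a j <;> cases b j <;> cases k j <;> decide

lemma xo_comm {n : ℕ} (a b : Fin n → Bool) : xo a b = xo b a := by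
  funext j
  exact Bool.xor_comm _ _

lemma sum_ketbra_xo_apply {n : ℕ} (k a b : Fin n → Bool) :
    (∑ i, (ketbra i (xo i k) + ketbra (xo i k) i)) a b = if k = xo a b then 2 else 0 := by
  simp only [Matrix.sum_apply, Matrix.add_apply, ketbra, single_apply, sum_add_distrib]
  rw [Fintype.sum_eq_single a fun i hi => by simp [hi],
    Fintype.sum_eq_single b fun i hi => by simp [hi]]
  simp only [xo_eq_iff, true_and, and_true, xo_comm b a]
  split_ifs <;> norm_num

noncomputable def plusState (n : ℕ) : Matrix (Fin n → Bool) (Fin n → Bool) ℂ :=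
  phaseState fun _ => 1

noncomputable def parityState (n : ℕ) : Matrix (Fin n → Bool) (Fin n → Bool) ℂ :=
  phaseState fun i => (-1) ^ wt i

lemma trace_plusState (n : ℕ) : (plusState n).trace = 1 :=
  trace_phaseState fun _ => norm_one

lemma trace_parityState (n : ℕ) : (parityState n).trace = 1 :=
  trace_phaseState fun _ => by simp

lemma rhoOdd_false_sub_rhoOdd_true (n : ℕ) :
    rhoOdd n false - rhoOdd n true =
      ((2 : ℂ) ^ (n - 1))⁻¹ • (plusState n - parityState n) := by
  have hdiff : rhoOdd n false - rhoOdd n true =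
      (1 / (2 ^ (n - 1) * 2 ^ n) : ℂ) • ∑ k ∈ Omega n, ∑ i, (rho0 k i - rho1 k i) := by
    simp only [rhoOdd, Bool.false_eq_true, if_false, if_true, ← smul_sub, ← sum_sub_distrib]
  have hsum (a b : Fin n → Bool) : (∑ k ∈ Omega n, ∑ i, (rho0 k i - rho1 k i)) a b =
      if Odd (wt (xo a b)) then 2 else 0 := by
    simp_rw [rho0_sub_rho1]
    rw [Matrix.sum_apply]
    simp_rw [sum_ketbra_xo_apply]
    rw [sum_ite_eq']
    simp [Omega]
  have hsign (a b : Fin n → Bool) : 1 * star 1 - (-1 : ℂ) ^ wt a * star ((-1) ^ wt b) =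
      if Odd (wt (xo a b)) then 2 else 0 := by
    rw [star_one, star_pow, star_neg, star_one, ← neg_one_pow_wt_xo]
    split_ifs with h
    · rw [h.neg_one_pow]; norm_num
    · rw [(Nat.not_odd_iff_even.mp h).neg_one_pow]; norm_num
  ext a b
  rw [hdiff, plusState, parityState, phaseState, phaseState, ← smul_sub, smul_smul,
    Matrix.smul_apply, Matrix.smul_apply, hsum, Matrix.sub_apply, vecMulVec_apply, vecMulVec_apply,
    Pi.star_apply, Pi.star_apply, hsign]
  simp [mul_comm]

theorem indistinguishability_rhoOdd (p : Polynomial ℝ) (hp : ∀ n : ℕ, 0 < p.eval (n : ℝ)) :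
    ∃ N : ℕ, ∀ n, N ≤ n →
      ∀ (d : ℕ) (Φ : Matrix (Fin n → Bool) (Fin n → Bool) ℂ →ₗ[ℂ] Matrix (Fin d) (Fin d) ℂ),
        (∃ (r : ℕ) (K : Fin r → Matrix (Fin d) (Fin n → Bool) ℂ),
          (∀ A, Φ A = ∑ j, K j * A * (K j)ᴴ) ∧ ∑ j, (K j)ᴴ * (K j) = 1) →
        ∀ (m : ℕ) (Epovm : Fin m → Matrix (Fin d) (Fin d) ℂ),
          (∀ j, (Epovm j).PosSemidef) → (∑ j, Epovm j = 1) →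
          (1/2 : ℝ) * ∑ j, ‖(Φ (rhoOdd n false) * Epovm j).trace
              - (Φ (rhoOdd n true) * Epovm j).trace‖ < 1 / p.eval (n : ℝ) := by
  obtain ⟨N, hN⟩ := eventually_atTop.mp p.eventually_eval_natCast_lt_two_pow_pred
  refine ⟨N, fun n hn d Φ ⟨r, K, hΦ, hK⟩ m E hE hE1 => ?_⟩
  have hstate {ρ : Matrix (Fin n → Bool) (Fin n → Bool) ℂ} (hρ : ρ.PosSemidef) :
      (Φ ρ).PosSemidef := by
    rw [hΦ]; exact posSemidef_sum_mul_mul_conjTranspose K hρ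
  have htrace (ρ : Matrix (Fin n → Bool) (Fin n → Bool) ℂ) : (Φ ρ).trace = ρ.trace := by
    rw [hΦ, trace_sum_mul_mul_conjTranspose K hK]
  calc (1/2 : ℝ) * ∑ j, ‖(Φ (rhoOdd n false) * E j).trace - (Φ (rhoOdd n true) * E j).trace‖
      = (1/2 : ℝ) * (‖((2 : ℂ) ^ (n - 1))⁻¹‖ *
          ∑ j, ‖(Φ (plusState n) * E j).trace - (Φ (parityState n) * E j).trace‖) := by
        simp_rw [trace_map_mul_sub_trace_map_mul Φ (rhoOdd_false_sub_rhoOdd_true n), norm_mul,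
          mul_sum]
    _ ≤ (1/2 : ℝ) * (‖((2 : ℂ) ^ (n - 1))⁻¹‖ *
          ((Φ (plusState n)).trace.re + (Φ (parityState n)).trace.re)) := by
        gcongr
        exact sum_norm_trace_mul_sub_le (hstate (phaseState_posSemidef _))
          (hstate (phaseState_posSemidef _)) hE hE1
    _ = 1 / 2 ^ (n - 1) := by
        simp only [htrace, trace_plusState, trace_parityState]
        norm_num
        ring
    _ < 1 / p.eval (n : ℝ) := one_div_lt_one_div_of_lt (hp n) (hN n hn)
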